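/- If C is an n-γ-closed subset of a topological space X, then θⁿ-aL(C, X) ≤ θⁿ-aL(X), i.e., every cover of C by open subsets of X has a subfamily of cardinality at most θⁿ-aL(X) whose n-θ-closures cover C. -/

import Mathlib

open Set Topology Cardinal

universe u v

def thetaCl (X : Type u) [TopologicalSpace X] (A : Set X) : Set X :=
  {x | ∀ U : Set X, IsOpen U → x ∈ U → (closure U ∩ A).Nonempty}

def thetaClN (X : Type u) [TopologicalSpace X] (n : ℕ) (A : Set X) : Set X :=
  (thetaCl X)^[n] A

def gammaCl (X : Type u) [TopologicalSpace X] (n : ℕ) (A : Set X) : Set X :=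
  {x | ∀ U : Set X, IsOpen U → x ∈ U → (thetaClN X n U ∩ A).Nonempty}

def ThetaUrysohn (X : Type u) [TopologicalSpace X] (n : ℕ) : Prop :=
  ∀ x y : X, x ≠ y → ∃ U V : Set X, IsOpen U ∧ IsOpen V ∧ x ∈ U ∧ y ∈ V ∧
    thetaClN X n U ∩ thetaClN X n V = ∅

noncomputable def thetaAL (X : Type u) [TopologicalSpace X] (n : ℕ) : Cardinal.{u} :=
  sInf {κ | ℵ₀ ≤ κ ∧ ∀ V : Set (Set X), (∀ U ∈ V, IsOpen U) → ⋃₀ V = Set.univ →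
    ∃ V' ⊆ V, #V' ≤ κ ∧ (⋃ U ∈ V', thetaClN X n U) = Set.univ}

noncomputable def thetaALrel (X : Type u) [TopologicalSpace X] (n : ℕ) (Y : Set X) : Cardinal.{u} :=
  sInf {κ | ℵ₀ ≤ κ ∧ ∀ V : Set (Set X), (∀ U ∈ V, IsOpen U) → Y ⊆ ⋃₀ V →
    ∃ V' ⊆ V, #V' ≤ κ ∧ Y ⊆ ⋃ U ∈ V', thetaClN X n U}

/-! The n-γ-closedness of `C` lets every point outside `C` be covered by an open set whose
n-fold θ-closure misses `C`. Adding all such sets to a cover of `C` gives an open cover of `X`;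
its subfamily of size at most θⁿ-aL(X) whose θⁿ-closures cover `X`, with the added sets discarded,
still has θⁿ-closures covering `C`. -/

section ThetaClosure

variable {X : Type u} [TopologicalSpace X]

lemma subset_thetaCl (A : Set X) : A ⊆ thetaCl X A :=
  fun x hx _ _ hxU => ⟨x, subset_closure hxU, hx⟩

lemma subset_thetaClN (n : ℕ) (A : Set X) : A ⊆ thetaClN X n A := by
  induction n with
  | zero => exact subset_rfl
  | succ n ih =>
    rw [thetaClN, Function.iterate_succ_apply']
    exact ih.trans (subset_thetaCl _)

lemma exists_isOpen_disjoint_thetaClN_of_notMem_gammaCl {n : ℕ} {A : Set X} {x : X}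
    (hx : x ∉ gammaCl X n A) : ∃ U, IsOpen U ∧ x ∈ U ∧ Disjoint (thetaClN X n U) A := by
  simp only [gammaCl, mem_ofPred_eq, not_forall, not_nonempty_iff_eq_empty] at hx
  obtain ⟨U, hU, hxU, hdisj⟩ := hx
  exact ⟨U, hU, hxU, disjoint_iff_inter_eq_empty.mpr hdisj⟩

end ThetaClosure

section AlmostLindelof

variable (X : Type u) [TopologicalSpace X] (n : ℕ)

lemma thetaAL_mem :
    ℵ₀ ≤ thetaAL X n ∧ ∀ V : Set (Set X), (∀ U ∈ V, IsOpen U) → ⋃₀ V = Set.univ →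
      ∃ V' ⊆ V, #V' ≤ thetaAL X n ∧ (⋃ U ∈ V', thetaClN X n U) = Set.univ := by
  refine csInf_mem (s := {κ | ℵ₀ ≤ κ ∧ ∀ V : Set (Set X), (∀ U ∈ V, IsOpen U) →
      ⋃₀ V = Set.univ → ∃ V' ⊆ V, #V' ≤ κ ∧ (⋃ U ∈ V', thetaClN X n U) = Set.univ})
    ⟨max ℵ₀ #(Set X), le_max_left _ _, fun V _ hcov =>
      ⟨V, subset_rfl, (mk_set_le V).trans (le_max_right _ _), ?_⟩⟩
  refine eq_univ_of_univ_subset ?_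
  rw [← hcov, sUnion_eq_biUnion]
  exact iUnion₂_mono fun U _ => subset_thetaClN n U

variable {X n}

lemma exists_thetaClN_cover_of_gammaCl_subset {C : Set X} (hC : gammaCl X n C ⊆ C)
    (V : Set (Set X)) (hV : ∀ U ∈ V, IsOpen U) (hcov : C ⊆ ⋃₀ V) :
    ∃ V' ⊆ V, #V' ≤ thetaAL X n ∧ C ⊆ ⋃ U ∈ V', thetaClN X n U := by
  set W := V ∪ {U | IsOpen U ∧ Disjoint (thetaClN X n U) C}
  have hW_open : ∀ U ∈ W, IsOpen U := by
    rintro U (hUV | hU)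
    exacts [hV U hUV, hU.1]
  have hW_cov : ⋃₀ W = Set.univ := by
    refine eq_univ_of_forall fun x => ?_
    by_cases hx : x ∈ C
    · obtain ⟨U, hUV, hxU⟩ := hcov hx
      exact ⟨U, Or.inl hUV, hxU⟩
    · obtain ⟨U, hU, hxU, hdisj⟩ :=
        exists_isOpen_disjoint_thetaClN_of_notMem_gammaCl fun h => hx (hC h)
      exact ⟨U, Or.inr ⟨hU, hdisj⟩, hxU⟩
  obtain ⟨W', hW'W, hW'card, hW'cov⟩ := (thetaAL_mem X n).2 W hW_open hW_cov
  refine ⟨W' ∩ V, inter_subset_right,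
    (mk_le_mk_of_subset inter_subset_left).trans hW'card, fun x hx => ?_⟩
  obtain ⟨U, hUW', hxU⟩ := mem_iUnion₂.mp (hW'cov ▸ mem_univ x)
  rcases hW'W hUW' with hUV | hU
  · exact mem_iUnion₂.mpr ⟨U, ⟨hUW', hUV⟩, hxU⟩
  · exact (hU.2.notMem_of_mem_left hxU hx).elim

end AlmostLindelof

theorem thetaALrel_le_thetaAL (X : Type u) [TopologicalSpace X] (n : ℕ) (C : Set X)
    (hC : gammaCl X n C = C) : thetaALrel X n C ≤ thetaAL X n :=
  csInf_le' ⟨(thetaAL_mem X n).1, exists_thetaClN_cover_of_gammaCl_subset hC.le⟩
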